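/- A term of the fireball calculus is normal with respect to call-by-fireball reduction if and only if it is a fireball (open harmony). -/
import Mathlib


/-! Syntax of the fireball calculus -/

inductive Term : Type
  | var : ℕ → Term
  | lam : ℕ → Term → Term
  | app : Term → Term → Term
deriving DecidableEq

def isValue : Term → Prop
  | .var _ => True
  | .lam _ _ => True
  | .app _ _ => False

mutual
  inductive Fireball : Term → Prop
    | var (x : ℕ) : Fireball (.var x)
    | lam (x : ℕ) (t : Term) : Fireball (.lam x t)
    | inert {t : Term} : Inert t → Fireball t
  inductive Inert : Term → Prop
    | head (x : ℕ) {f : Term} : Fireball f → Inert (.app (.var x) f)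
    | app {i f : Term} : Inert i → Fireball f → Inert (.app i f)
end

def subst (x : ℕ) (s : Term) : Term → Term
  | .var y => if y = x then s else .var y
  | .lam y t => if y = x then .lam y t else .lam y (subst x s t)
  | .app t u => .app (subst x s t) (subst x s u)

def fv : Term → Finset ℕ
  | .var x => {x}
  | .lam x t => fv t \ {x}
  | .app t u => fv t ∪ fv u

/-! Call-by-value and call-by-fireball reduction (right-to-left evaluation) -/

inductive StepV : Term → Term → Prop
  | beta {x : ℕ} {t v : Term} : isValue v → StepV (.app (.lam x t) v) (subst x v t)
  | appR {t u u' : Term} : StepV u u' → StepV (.app t u) (.app t u')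
  | appL {t t' f : Term} : Fireball f → StepV t t' → StepV (.app t f) (.app t' f)

inductive StepF : Term → Term → Prop
  | betav {x : ℕ} {t v : Term} : isValue v → StepF (.app (.lam x t) v) (subst x v t)
  | betai {x : ℕ} {t i : Term} : Inert i → StepF (.app (.lam x t) i) (subst x i t)
  | appR {t u u' : Term} : StepF u u' → StepF (.app t u) (.app t u')
  | appL {t t' f : Term} : Fireball f → StepF t t' → StepF (.app t f) (.app t' f)

/-! The split fireball calculus -/

abbrev Env := List (ℕ × Term)
abbrev Program := Term × Env

inductive Ctx : Type
  | hole : Ctx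
  | appR : Term → Ctx → Ctx
  | appL : Ctx → Term → Ctx

def Ctx.ok : Ctx → Prop
  | .hole => True
  | .appR _ C => C.ok
  | .appL C f => C.ok ∧ Fireball f

def Ctx.fill : Ctx → Term → Term
  | .hole, t => t
  | .appR u C, t => .app u (C.fill t)
  | .appL C f, t => .app (C.fill t) f

inductive PStep : Program → Program → Prop
  | betav {C : Ctx} {x : ℕ} {t v : Term} {E : Env} : C.ok → isValue v →
      PStep (C.fill (.app (.lam x t) v), E) (C.fill (subst x v t), E)
  | betai {C : Ctx} {x : ℕ} {t i : Term} {E : Env} : C.ok → Inert i →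
      PStep (C.fill (.app (.lam x t) i), E) (C.fill t, (x, i) :: E)

def unfold : Program → Term
  | (t, []) => t
  | (t, (x, i) :: E) => unfold (subst x i t, E)
termination_by p => p.2.length
decreasing_by simp

inductive PSteps : ℕ → Program → Program → Prop
  | refl (p : Program) : PSteps 0 p p
  | step {p q r : Program} {k : ℕ} : PStep p q → PSteps k q r → PSteps (k + 1) p r

/-! Sizes of terms and programs -/

def sizeT : Term → ℕ
  | .var _ => 0
  | .lam _ _ => 0
  | .app t u => sizeT t + sizeT u + 1

def sizeP : Program → ℕ
  | (t, E) => sizeT t + (E.map (fun xi => sizeT xi.2)).sum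

/-! Multi types (non-idempotent intersection types) -/

mutual
  inductive LTy : Type
    | arr : MTy → MTy → LTy
  inductive MTy : Type
    | nil : MTy
    | cons : LTy → MTy → MTy
end

def MTy.append : MTy → MTy → MTy
  | .nil, N => N
  | .cons L M, N => .cons L (MTy.append M N)

theorem MTy.append_nil : ∀ M : MTy, MTy.append M .nil = M
  | .nil => rfl
  | .cons L M => congrArg (MTy.cons L) (MTy.append_nil M)

instance : AddZeroClass MTy where
  zero := .nil
  add := MTy.append
  zero_add _ := rfl
  add_zero := MTy.append_nil

mutual
  def LTy.size : LTy → ℕ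
    | .arr M N => 1 + M.size + N.size
  def MTy.size : MTy → ℕ
    | .nil => 0
    | .cons L M => L.size + M.size
end

/-- Type contexts: finitely supported maps from variables to multi types. -/
abbrev Ctxt := ℕ →₀ MTy

def sizeCtx (Γ : Ctxt) : ℕ := Γ.sum fun _ M => M.size

/-! The multi type system for the split fireball calculus.
    The natural-number index of a judgement is the number of `@`-rules
    of the derivation, i.e. its size. -/

inductive TyT : Ctxt → Term → MTy → ℕ → Prop
  | ax (x : ℕ) (M : MTy) : TyT (Finsupp.single x M) (.var x) M 0
  | app {Γ Δ : Ctxt} {t u : Term} {M N : MTy} {n m : ℕ} :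
      TyT Γ t (.cons (.arr M N) .nil) n → TyT Δ u M m →
      TyT (Γ + Δ) (.app t u) N (n + m + 1)
  | lam_nil (x : ℕ) (t : Term) : TyT 0 (.lam x t) .nil 0
  | lam_one {Γ : Ctxt} {t : Term} {N : MTy} {n : ℕ} (x : ℕ) :
      TyT Γ t N n →
      TyT (Γ.update x 0) (.lam x t) (.cons (.arr (Γ x) N) .nil) n
  | lam_add {Γ Δ : Ctxt} {x : ℕ} {t : Term} {M N : MTy} {n m : ℕ} :
      TyT Γ (.lam x t) M n → TyT Δ (.lam x t) N m →
      TyT (Γ + Δ) (.lam x t) (M + N) (n + m)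

inductive TyP : Ctxt → Program → MTy → ℕ → Prop
  | nil {Γ : Ctxt} {t : Term} {M : MTy} {n : ℕ} :
      TyT Γ t M n → TyP Γ (t, []) M n
  | snoc {Γ Δ : Ctxt} {t : Term} {E : Env} {x : ℕ} {i : Term} {N : MTy} {n m : ℕ} :
      TyP Γ (t, E) N n → TyT Δ i (Γ x) m → Inert i →
      TyP (Γ.update x 0 + Δ) (t, E ++ [(x, i)]) N (n + m)

/-! Expressions: terms or programs -/

inductive Expr : Type
  | tm : Term → Expr
  | pr : Program → Expr

def TyE (Γ : Ctxt) (e : Expr) (M : MTy) (n : ℕ) : Prop :=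
  match e with
  | .tm t => TyT Γ t M n
  | .pr p => TyP Γ p M n

def fvE : Expr → Finset ℕ
  | .tm t => fv t
  | .pr p => fv (unfold p)

def sizeE : Expr → ℕ
  | .tm t => sizeT t
  | .pr p => sizeP p

def normE : Expr → Prop
  | .tm t => ∀ u, ¬ StepF t u
  | .pr p => ∀ q, ¬ PStep p q

/-! Inert multi types and inert type contexts -/

inductive InertM : MTy → Prop
  | nil : InertM .nil
  | cons {N M : MTy} : InertM N → InertM M → InertM (.cons (.arr .nil N) M)

def InertCtx (Γ : Ctxt) : Prop := ∀ x, InertM (Γ x)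

theorem fireball_normal : ∀ t, Fireball t → ∀ u, ¬ StepF t u := by
  intro t
  induction t with
  | var x => intro _ u h; cases h
  | lam x b _ => intro _ u h; cases h
  | app a b iha ihb =>
    intro hf u h
    have hi : Inert (.app a b) := by cases hf with | inert h => exact h
    cases hi with
    | head x hb =>
      cases h with
      | appR hs => exact ihb hb _ hs
      | appL hfb hs => cases hs
    | app hia hb =>
      cases h with
      | betav hv => cases hia
      | betai hv => cases hia
      | appR hs => exact ihb hb _ hs
      | appL hfb hs => exact iha (Fireball.inert hia) _ hs

theorem open_harmony (t : Term) : (∀ u, ¬ StepF t u) ↔ Fireball t := by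
  constructor
  · intro hnorm
    induction t with
    | var x => exact Fireball.var x
    | lam x b _ => exact Fireball.lam x b
    | app a b iha ihb =>
      have hb : ∀ u, ¬ StepF b u := fun u h => hnorm _ (StepF.appR h)
      have hfb : Fireball b := ihb hb
      have ha : ∀ u, ¬ StepF a u := fun u h => hnorm _ (StepF.appL hfb h)
      have hfa : Fireball a := iha ha
      cases hfa with
      | var x => exact Fireball.inert (Inert.head x hfb)
      | lam x s =>
        exfalso
        cases hfb with
        | var y => exact hnorm _ (StepF.betav trivial)
        | lam y s' => exact hnorm _ (StepF.betav trivial)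
        | inert hi => exact hnorm _ (StepF.betai hi)
      | inert hia => exact Fireball.inert (Inert.app hia hfb)
  · intro hf u h
    exact fireball_normal t hf u h
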